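/- Let M, V : ℝ × [0,∞) → ℝ and f, p : ℝ × [0,∞) → ℂ be smooth with M(t,0) = 0 for all t and 2M(t,r) < r for all r > 0; write Φ = 1 − 2M/r. Suppose that for r > 0 they satisfy the spherically symmetric Einstein–Klein–Gordon system: M_r = 4πr²μ₀(|f|² + Φ(|f_r|² + |p|²)/Υ²); V_r = Φ^{−1}(M/r² − 4πrμ₀(|f|² − Φ(|f_r|² + |p|²)/Υ²)); f_t = p e^V √Φ; and p_t = e^V(−Υ² f Φ^{−1/2} + (2f_r/r)√Φ) + ∂_r(e^V f_r √Φ). Then the second constraint-evolution equation also holds for all r > 0: V_t M_t = −r e^{2V}[(V_rr + V_r² + V_r/r)Φ² − 3M_t²/(r²e^{2V}) · Φ^{−1} − M_tt/(r e^{2V}) + (M/r − M_r)(1/r² + V_r/r)Φ + 8πμ₀ Φ (|f|² + Φ(|f_r|² − |p|²)/Υ²)]. -/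

import Mathlib

open Real

open Set Filter Topology Function

noncomputable section

namespace EKG

abbrev S : Set (ℝ × ℝ) := Set.univ ×ˢ Set.Ici 0

variable {X : Type*} [NormedAddCommGroup X] [NormedSpace ℝ X]

lemma S_mem_nhds {t r : ℝ} (hr : 0 < r) : S ∈ 𝓝 (t, r) :=
  mem_of_superset ((isOpen_univ.prod isOpen_Ioi).mem_nhds (by simp [hr]))
    (prod_mono le_rfl Ioi_subset_Ici_self)

lemma mem_S (t : ℝ) {r : ℝ} (hr : 0 ≤ r) : (t, r) ∈ S := by simp [hr]

lemma udS : UniqueDiffOn ℝ S := uniqueDiffOn_univ.prod (uniqueDiffOn_Ici 0)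

variable {u : ℝ → ℝ → X} (hu : ContDiffOn ℝ (⊤ : ℕ∞) (uncurry u) S) {t r : ℝ}
include hu

lemma cda (hr : 0 < r) : ContDiffAt ℝ (⊤ : ℕ∞) (uncurry u) (t, r) := hu.contDiffAt (S_mem_nhds hr)

lemma hasDerivAt_slice_r (hr : 0 < r) :
    HasDerivAt (fun r' => u t r') (fderiv ℝ (uncurry u) (t, r) (0, 1)) r := by
  have h1 := ((cda hu hr (t := t)).differentiableAt (by simp)).hasFDerivAt
  have h2 : HasDerivAt (fun r' : ℝ => ((t, r') : ℝ × ℝ)) ((0:ℝ), (1:ℝ)) r :=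
    (hasDerivAt_const _ _).prodMk (hasDerivAt_id _)
  exact h1.comp_hasDerivAt r h2

lemma hasDerivAt_slice_t (hr : 0 < r) :
    HasDerivAt (fun t' => u t' r) (fderiv ℝ (uncurry u) (t, r) (1, 0)) t := by
  have h1 := ((cda hu hr (t := t)).differentiableAt (by simp)).hasFDerivAt
  have h2 : HasDerivAt (fun t' : ℝ => ((t', r) : ℝ × ℝ)) ((1:ℝ), (0:ℝ)) t :=
    (hasDerivAt_id _).prodMk (hasDerivAt_const _ _)
  exact h1.comp_hasDerivAt t h2

lemma deriv_slice_r (hr : 0 < r) :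
    deriv (fun r' => u t r') r = fderiv ℝ (uncurry u) (t, r) (0, 1) :=
  (hasDerivAt_slice_r hu hr).deriv

lemma deriv_slice_t (hr : 0 < r) :
    deriv (fun t' => u t' r) t = fderiv ℝ (uncurry u) (t, r) (1, 0) :=
  (hasDerivAt_slice_t hu hr).deriv

lemma cda_fderiv_apply (v : ℝ × ℝ) (hr : 0 < r) :
    ContDiffAt ℝ (⊤ : ℕ∞) (fun x => fderiv ℝ (uncurry u) x v) (t, r) :=
  ((cda hu hr (t := t)).fderiv_right (by simp)).clm_apply contDiffAt_const

lemma hasDerivAt_D_r (v : ℝ × ℝ) (hr : 0 < r) :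
    HasDerivAt (fun r' => fderiv ℝ (uncurry u) (t, r') v)
      (fderiv ℝ (fun x => fderiv ℝ (uncurry u) x v) (t, r) (0, 1)) r := by
  have h1 := ((cda_fderiv_apply hu v hr (t := t)).differentiableAt (by simp)).hasFDerivAt
  have h2 : HasDerivAt (fun r' : ℝ => ((t, r') : ℝ × ℝ)) ((0:ℝ), (1:ℝ)) r :=
    (hasDerivAt_const _ _).prodMk (hasDerivAt_id _)
  exact h1.comp_hasDerivAt r h2

lemma hasDerivAt_D_t (v : ℝ × ℝ) (hr : 0 < r) :
    HasDerivAt (fun t' => fderiv ℝ (uncurry u) (t', r) v)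
      (fderiv ℝ (fun x => fderiv ℝ (uncurry u) x v) (t, r) (1, 0)) t := by
  have h1 := ((cda_fderiv_apply hu v hr (t := t)).differentiableAt (by simp)).hasFDerivAt
  have h2 : HasDerivAt (fun t' : ℝ => ((t', r) : ℝ × ℝ)) ((1:ℝ), (0:ℝ)) t :=
    (hasDerivAt_id _).prodMk (hasDerivAt_const _ _)
  exact h1.comp_hasDerivAt t h2

/-- eventually in `𝓝 r`, the `t`-slice deriv equals the fderiv applied to `(1,0)`. -/
lemma eventually_deriv_slice_t (hr : 0 < r) :
    (fun r' => deriv (fun t' => u t' r') t) =ᶠ[𝓝 r]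
      (fun r' => fderiv ℝ (uncurry u) (t, r') (1, 0)) := by
  filter_upwards [Ioi_mem_nhds hr] with r' hr'
  exact deriv_slice_t hu hr'

lemma eventually_deriv_slice_r (hr : 0 < r) :
    (fun r' => deriv (fun s => u t s) r') =ᶠ[𝓝 r]
      (fun r' => fderiv ℝ (uncurry u) (t, r') (0, 1)) := by
  filter_upwards [Ioi_mem_nhds hr] with r' hr'
  exact deriv_slice_r hu hr'

lemma mixed_core (hr : 0 < r) :
    ∃ K : X, HasDerivAt (fun r' => deriv (fun t' => u t' r') t) K r ∧
             HasDerivAt (fun t' => deriv (fun s => u t' s) r) K t := by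
  have hsym := (cda hu hr (t := t)).isSymmSndFDerivAt ((by rw [minSmoothness_of_isRCLikeNormedField]; exact WithTop.coe_le_coe.mpr (le_top : (2:ℕ∞) ≤ ⊤)))
  have hdiff : DifferentiableAt ℝ (fderiv ℝ (uncurry u)) (t, r) :=
    ((cda hu hr (t := t)).fderiv_right (m := (⊤ : ℕ∞)) (by simp)).differentiableAt (by simp)
  have key : ∀ v w : ℝ × ℝ, fderiv ℝ (fun x => fderiv ℝ (uncurry u) x v) (t, r) w =
      fderiv ℝ (fderiv ℝ (uncurry u)) (t, r) w v := by
    intro v w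
    rw [fderiv_clm_apply hdiff (differentiableAt_const v)]
    simp
  refine ⟨fderiv ℝ (fderiv ℝ (uncurry u)) (t, r) (0, 1) (1, 0), ?_, ?_⟩
  · have h1 := hasDerivAt_D_r hu (1, 0) (t := t) hr
    rw [key (1,0) (0,1)] at h1
    exact h1.congr_of_eventuallyEq (eventually_deriv_slice_t hu hr)
  · have h2 := hasDerivAt_D_t hu (0, 1) (t := t) hr
    rw [key (0,1) (1,0), hsym (1,0) (0,1)] at h2
    refine h2.congr_of_eventuallyEq (Eventually.of_forall fun t' => ?_)
    exact deriv_slice_r hu hr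

/-- `∂_r (∂_t u)` exists and equals `∂_t (∂_r u)`. -/
lemma mixed₁ (hr : 0 < r) :
    HasDerivAt (fun r' => deriv (fun t' => u t' r') t)
      (deriv (fun t' => deriv (fun s => u t' s) r) t) r := by
  obtain ⟨K, h1, h2⟩ := mixed_core hu hr
  rwa [h2.deriv]

lemma mixed₂ (hr : 0 < r) :
    HasDerivAt (fun t' => deriv (fun s => u t' s) r)
      (deriv (fun r' => deriv (fun t' => u t' r') t) r) t := by
  obtain ⟨K, h1, h2⟩ := mixed_core hu hr
  rwa [h1.deriv]

/-- second pure `r`-derivative exists. -/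
lemma hasDerivAt_deriv_r (hr : 0 < r) :
    HasDerivAt (fun r' => deriv (fun s => u t s) r')
      (deriv (fun r' => deriv (fun s => u t s) r') r) r := by
  have h1 := hasDerivAt_D_r hu (0, 1) (t := t) hr
  have h2 := h1.congr_of_eventuallyEq (eventually_deriv_slice_r hu hr)
  rwa [h2.deriv]

-- Boundary lemmas
lemma tendsto_fderiv_boundary (t : ℝ) (v : ℝ × ℝ) :
    Tendsto (fun r => fderiv ℝ (uncurry u) (t, r) v) (𝓝[>] 0)
      (𝓝 (fderivWithin ℝ (uncurry u) S (t, 0) v)) := by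
  have hc : ContinuousOn (fderivWithin ℝ (uncurry u) S) S :=
    hu.continuousOn_fderivWithin udS (by simp)
  have hcw := hc.continuousWithinAt (mem_S t le_rfl)
  have hcurve : Tendsto (fun r : ℝ => ((t, r) : ℝ × ℝ)) (𝓝[>] 0) (𝓝[S] (t, 0)) := by
    rw [tendsto_nhdsWithin_iff]
    refine ⟨?_, ?_⟩
    · rw [nhds_prod_eq]
      exact tendsto_const_nhds.prodMk (tendsto_id.mono_left nhdsWithin_le_nhds)
    filter_upwards [self_mem_nhdsWithin] with r hr
    exact mem_S t (le_of_lt hr)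
  have h1 : Tendsto (fun r => fderivWithin ℝ (uncurry u) S (t, r)) (𝓝[>] 0)
      (𝓝 (fderivWithin ℝ (uncurry u) S (t, 0))) := hcw.tendsto.comp hcurve
  have h2 : Tendsto (fun r => fderivWithin ℝ (uncurry u) S (t, r) v) (𝓝[>] 0)
      (𝓝 (fderivWithin ℝ (uncurry u) S (t, 0) v)) := by
    exact ((ContinuousLinearMap.apply ℝ X v).continuous.tendsto _).comp h1
  refine h2.congr' ?_
  filter_upwards [self_mem_nhdsWithin] with r hr
  rw [fderivWithin_of_mem_nhds (S_mem_nhds hr)]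

lemma hasDerivAt_slice_t_boundary (t : ℝ) :
    HasDerivAt (fun t' => u t' 0) (fderivWithin ℝ (uncurry u) S (t, 0) (1, 0)) t := by
  have hd : DifferentiableWithinAt ℝ (uncurry u) S (t, 0) :=
    (hu (t, 0) (mem_S t le_rfl)).differentiableWithinAt (by simp)
  have hcurve : HasDerivWithinAt (fun t' : ℝ => ((t', (0:ℝ)) : ℝ × ℝ)) ((1:ℝ), (0:ℝ)) univ t :=
    ((hasDerivAt_id _).prodMk (hasDerivAt_const _ _)).hasDerivWithinAt
  have := hd.hasFDerivWithinAt.comp_hasDerivWithinAt t hcurve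
    (fun t' _ => mem_S t' le_rfl)
  rw [hasDerivWithinAt_univ] at this
  exact this

lemma hasDerivWithinAt_slice_r_boundary (t : ℝ) :
    HasDerivWithinAt (fun r => u t r) (fderivWithin ℝ (uncurry u) S (t, 0) (0, 1)) (Ici 0) 0 := by
  have hd : DifferentiableWithinAt ℝ (uncurry u) S (t, 0) :=
    (hu (t, 0) (mem_S t le_rfl)).differentiableWithinAt (by simp)
  have hcurve : HasDerivWithinAt (fun r : ℝ => ((t, r) : ℝ × ℝ)) ((0:ℝ), (1:ℝ)) (Ici 0) 0 :=
    ((hasDerivAt_const _ _).prodMk (hasDerivAt_id _)).hasDerivWithinAt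
  exact hd.hasFDerivWithinAt.comp_hasDerivWithinAt 0 hcurve (fun r hr => mem_S t hr)

lemma tendsto_slice_boundary (t : ℝ) :
    Tendsto (fun r => u t r) (𝓝[>] 0) (𝓝 (u t 0)) := by
  have hc := hu.continuousOn
  have hcw := hc.continuousWithinAt (mem_S t le_rfl)
  have hcurve : Tendsto (fun r : ℝ => ((t, r) : ℝ × ℝ)) (𝓝[>] 0) (𝓝[S] (t, 0)) := by
    rw [tendsto_nhdsWithin_iff]
    refine ⟨?_, ?_⟩
    · rw [nhds_prod_eq]
      exact tendsto_const_nhds.prodMk (tendsto_id.mono_left nhdsWithin_le_nhds)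
    filter_upwards [self_mem_nhdsWithin] with r hr
    exact mem_S t (le_of_lt hr)
  exact hcw.tendsto.comp hcurve

end EKG

-- Complex helpers
namespace EKG
variable {X : Type*} [NormedAddCommGroup X] [NormedSpace ℝ X]
lemma cnormsq (z : ℂ) : ‖z‖^2 = z.re^2 + z.im^2 := by
  rw [← Complex.normSq_eq_norm_sq, Complex.normSq_apply]; ring

lemma _root_.HasDerivAt.creal {g : ℝ → ℂ} {z : ℂ} {x : ℝ} (h : HasDerivAt g z x) :
    HasDerivAt (fun y => (g y).re) z.re x := Complex.reCLM.hasFDerivAt.comp_hasDerivAt x h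

lemma _root_.HasDerivAt.cimag {g : ℝ → ℂ} {z : ℂ} {x : ℝ} (h : HasDerivAt g z x) :
    HasDerivAt (fun y => (g y).im) z.im x := Complex.imCLM.hasFDerivAt.comp_hasDerivAt x h

lemma hasDerivAt_cnormsq {g : ℝ → ℂ} {z : ℂ} {x : ℝ} (h : HasDerivAt g z x) :
    HasDerivAt (fun y => ‖g y‖^2) (2*((g x).re*z.re + (g x).im*z.im)) x := by
  have h1 := (h.creal.mul h.creal).add (h.cimag.mul h.cimag)
  have h2 : (fun y => ‖g y‖^2) = fun y => (g y).re * (g y).re + (g y).im * (g y).im := by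
    funext y; rw [cnormsq]; ring
  rw [h2]; exact h1.congr_deriv (by ring)

variable {u : ℝ → ℝ → X} (hu : ContDiffOn ℝ (⊤ : ℕ∞) (uncurry u) S) {t r : ℝ}
include hu

lemma hasDerivAt_slice_r' (hr : 0 < r) :
    HasDerivAt (fun r' => u t r') (deriv (fun r' => u t r') r) r := by
  have h := hasDerivAt_slice_r hu (t := t) hr; rw [← h.deriv] at h; exact h

lemma hasDerivAt_slice_t' (hr : 0 < r) :
    HasDerivAt (fun t' => u t' r) (deriv (fun t' => u t' r) t) t := by
  have h := hasDerivAt_slice_t hu (t := t) hr; rw [← h.deriv] at h; exact h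

end EKG

end

open EKG

set_option maxHeartbeats 4000000

noncomputable section

/-- The metric quantity `Φ = 1 - 2M/r`. -/
def Phi (M : ℝ → ℝ → ℝ) (t r : ℝ) : ℝ := 1 - 2 * M t r / r

/-- The mass-evolution quantity `F = 4πr²μ₀ e^V Φ^{3/2} (2 Re(f_r p̄))/Υ²`. -/
def Ff (M V : ℝ → ℝ → ℝ) (f p : ℝ → ℝ → ℂ) (μ₀ Υ : ℝ) (t r : ℝ) : ℝ :=
  8 * π * μ₀ / Υ ^ 2 * r ^ 2 * Real.exp (V t r) * (1 - 2 * M t r / r) *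
    Real.sqrt (1 - 2 * M t r / r) *
    ((deriv (fun s => f t s) r).re * (p t r).re + (deriv (fun s => f t s) r).im * (p t r).im)

lemma phi_pos {M : ℝ → ℝ → ℝ} (h2M : ∀ t : ℝ, ∀ r > (0:ℝ), 2 * M t r < r)
    (t : ℝ) {r : ℝ} (hr : 0 < r) : 0 < 1 - 2 * M t r / r := by
  rw [sub_pos, div_lt_one hr]; exact h2M t r hr


lemma hasDerivAt_H
    {M V : ℝ → ℝ → ℝ} {f p : ℝ → ℝ → ℂ} {μ₀ Υ : ℝ} (hΥ : 0 < Υ)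
    (hMs : ContDiffOn ℝ (⊤ : ℕ∞) (uncurry M) S) (hVs : ContDiffOn ℝ (⊤ : ℕ∞) (uncurry V) S)
    (hfs : ContDiffOn ℝ (⊤ : ℕ∞) (uncurry f) S) (hps : ContDiffOn ℝ (⊤ : ℕ∞) (uncurry p) S)
    (h2M : ∀ t : ℝ, ∀ r > (0:ℝ), 2 * M t r < r)
    (hMr : ∀ t : ℝ, ∀ r > (0:ℝ),
      deriv (fun r' => M t r') r =
        4 * π * r ^ 2 * μ₀ * (‖f t r‖ ^ 2 +
          Phi M t r * (‖deriv (fun r' => f t r') r‖ ^ 2 + ‖p t r‖ ^ 2) / Υ ^ 2))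
    (hVr : ∀ t : ℝ, ∀ r > (0:ℝ),
      deriv (fun r' => V t r') r =
        (Phi M t r)⁻¹ * (M t r / r ^ 2 -
          4 * π * r * μ₀ * (‖f t r‖ ^ 2 -
            Phi M t r * (‖deriv (fun r' => f t r') r‖ ^ 2 + ‖p t r‖ ^ 2) / Υ ^ 2)))
    (hft : ∀ t : ℝ, ∀ r > (0:ℝ),
      deriv (fun t' => f t' r) t =
        p t r * (Real.exp (V t r) : ℂ) * (Real.sqrt (Phi M t r) : ℂ))
    (hpt : ∀ t : ℝ, ∀ r > (0:ℝ),
      deriv (fun t' => p t' r) t =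
        (Real.exp (V t r) : ℂ) *
          (-(Υ : ℂ) ^ 2 * f t r * ((Real.sqrt (Phi M t r) : ℂ))⁻¹ +
            2 * deriv (fun r' => f t r') r / (r : ℂ) * (Real.sqrt (Phi M t r) : ℂ)) +
        deriv (fun r' =>
          (Real.exp (V t r') : ℂ) * deriv (fun s => f t s) r' *
            (Real.sqrt (Phi M t r') : ℂ)) r)
    (t : ℝ) {r : ℝ} (hr : 0 < r) :
    HasDerivAt (fun r' => (deriv (fun t' => M t' r') t - Ff M V f p μ₀ Υ t r') *
      (Real.exp (V t r') / Real.sqrt (1 - 2 * M t r' / r'))) 0 r := by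
  simp only [Phi] at hMr hVr hft hpt
  simp only [Ff]
  have hφpos : 0 < 1 - 2 * M t r / r := phi_pos h2M t hr
  have hspos : 0 < Real.sqrt (1 - 2 * M t r / r) := Real.sqrt_pos.mpr hφpos
  have hs2 : Real.sqrt (1 - 2 * M t r / r) ^ 2 = 1 - 2 * M t r / r := Real.sq_sqrt hφpos.le
  have hM_r : HasDerivAt (fun r' => M t r') (deriv (fun r' => M t r') r) r := hasDerivAt_slice_r' hMs hr
  have hV_r : HasDerivAt (fun r' => V t r') (deriv (fun r' => V t r') r) r := hasDerivAt_slice_r' hVs hr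
  have hp_r : HasDerivAt (fun r' => p t r') (deriv (fun r' => p t r') r) r := hasDerivAt_slice_r' hps hr
  have hfr_r : HasDerivAt (fun r' => deriv (fun s => f t s) r') (deriv (fun r' => deriv (fun s => f t s) r') r) r :=
    hasDerivAt_deriv_r hfs hr
  have hφ_r : HasDerivAt (fun r' => 1 - 2 * M t r' / r') (2 * M t r / r ^ 2 - 2 * deriv (fun r' => M t r') r / r) r := by
    have h := ((hM_r.const_mul 2).div (hasDerivAt_id r) hr.ne').const_sub 1
    refine h.congr_deriv ?_
    simp only [id]
    all_goals field_simp
    all_goals try ring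
  have hs_r : HasDerivAt (fun r' => Real.sqrt (1 - 2 * M t r' / r')) ((2 * M t r / r ^ 2 - 2 * deriv (fun r' => M t r') r / r) / (2 * Real.sqrt (1 - 2 * M t r / r))) r :=
    hφ_r.sqrt hφpos.ne'
  have he_r : HasDerivAt (fun r' => Real.exp (V t r')) (Real.exp (V t r) * deriv (fun r' => V t r') r) r := hV_r.exp
  have hef : HasDerivAt (fun r' => ((Real.exp (V t r') : ℝ) : ℂ)) ((Real.exp (V t r) * deriv (fun r' => V t r') r : ℝ) : ℂ) r := he_r.ofReal_comp
  have hsf : HasDerivAt (fun r' => ((Real.sqrt (1 - 2 * M t r' / r') : ℝ) : ℂ)) ((((2 * M t r / r ^ 2 - 2 * deriv (fun r' => M t r') r / r) / (2 * Real.sqrt (1 - 2 * M t r / r))) : ℝ) : ℂ) r :=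
    hs_r.ofReal_comp
  have hM_t : HasDerivAt (fun t' => M t' r) (deriv (fun t' => M t' r) t) t := hasDerivAt_slice_t' hMs hr
  have hf_t : HasDerivAt (fun t' => f t' r) (p t r * (Real.exp (V t r) : ℂ) * (Real.sqrt (1 - 2 * M t r / r) : ℂ)) t := by
    have h := hasDerivAt_slice_t' hfs (t := t) hr
    rwa [hft t r hr] at h
  have hp_t : HasDerivAt (fun t' => p t' r) (deriv (fun t' => p t' r) t) t := hasDerivAt_slice_t' hps hr
  have hfr_t : HasDerivAt (fun t' => deriv (fun s => f t' s) r) (deriv (fun r' => deriv (fun t' => f t' r') t) r) t := mixed₂ hfs hr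
  have hφ_t : HasDerivAt (fun t' => 1 - 2 * M t' r / r) (-(2 * deriv (fun t' => M t' r) t / r)) t := by
    have h := (((hasDerivAt_slice_t' hMs (t := t) hr).const_mul 2).div_const r).const_sub 1
    convert h using 1
    try ring
  have hftr_eq : deriv (fun r' => deriv (fun t' => f t' r') t) r = ((deriv (fun r' => p t r') r * ((Real.exp (V t r) : ℝ) : ℂ) + p t r * ((Real.exp (V t r) * deriv (fun r' => V t r') r : ℝ) : ℂ)) * ((Real.sqrt (1 - 2 * M t r / r) : ℝ) : ℂ) + p t r * ((Real.exp (V t r) : ℝ) : ℂ) * ((((2 * M t r / r ^ 2 - 2 * deriv (fun r' => M t r') r / r) / (2 * Real.sqrt (1 - 2 * M t r / r))) : ℝ) : ℂ)) := by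
    have hprod := (hp_r.mul hef).mul hsf
    have heve : (fun r' => deriv (fun t' => f t' r') t) =ᶠ[𝓝 r]
        (fun r' => p t r' * ((Real.exp (V t r') : ℝ) : ℂ) *
          ((Real.sqrt (1 - 2 * M t r' / r') : ℝ) : ℂ)) := by
      filter_upwards [Ioi_mem_nhds hr] with r' hr' using hft t r' hr'
    rw [heve.deriv_eq]
    exact hprod.deriv
  have hdfi_eq : deriv (fun r' => ((Real.exp (V t r') : ℝ) : ℂ) * deriv (fun s => f t s) r' *
      ((Real.sqrt (1 - 2 * M t r' / r') : ℝ) : ℂ)) r = ((((Real.exp (V t r) * deriv (fun r' => V t r') r : ℝ) : ℂ) * deriv (fun r' => f t r') r + ((Real.exp (V t r) : ℝ) : ℂ) * deriv (fun r' => deriv (fun s => f t s) r') r) * ((Real.sqrt (1 - 2 * M t r / r) : ℝ) : ℂ) + ((Real.exp (V t r) : ℝ) : ℂ) * deriv (fun r' => f t r') r * ((((2 * M t r / r ^ 2 - 2 * deriv (fun r' => M t r') r / r) / (2 * Real.sqrt (1 - 2 * M t r / r))) : ℝ) : ℂ)) :=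
    ((hef.mul hfr_r).mul hsf).deriv
  have hnf_t : HasDerivAt (fun t' => ‖f t' r‖ ^ 2)
      (2 * ((f t r).re * (p t r * (Real.exp (V t r) : ℂ) * (Real.sqrt (1 - 2 * M t r / r) : ℂ)).re + (f t r).im * (p t r * (Real.exp (V t r) : ℂ) * (Real.sqrt (1 - 2 * M t r / r) : ℂ)).im)) t := hasDerivAt_cnormsq hf_t
  have hnfr_t : HasDerivAt (fun t' => ‖deriv (fun r' => f t' r') r‖ ^ 2)
      (2 * ((deriv (fun r' => f t r') r).re * (deriv (fun r' => deriv (fun t' => f t' r') t) r).re + (deriv (fun r' => f t r') r).im * (deriv (fun r' => deriv (fun t' => f t' r') t) r).im)) t := hasDerivAt_cnormsq hfr_t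
  have hnp_t : HasDerivAt (fun t' => ‖p t' r‖ ^ 2) (2 * ((p t r).re * (deriv (fun t' => p t' r) t).re + (p t r).im * (deriv (fun t' => p t' r) t).im)) t := hasDerivAt_cnormsq hp_t
  have hT : HasDerivAt (fun t' => 4 * π * r ^ 2 * μ₀ * (‖f t' r‖ ^ 2 +
      (1 - 2 * M t' r / r) * (‖deriv (fun r' => f t' r') r‖ ^ 2 + ‖p t' r‖ ^ 2) / Υ ^ 2))
      (4 * π * r ^ 2 * μ₀ * (2 * ((f t r).re * (p t r * (Real.exp (V t r) : ℂ) * (Real.sqrt (1 - 2 * M t r / r) : ℂ)).re + (f t r).im * (p t r * (Real.exp (V t r) : ℂ) * (Real.sqrt (1 - 2 * M t r / r) : ℂ)).im) + (-(2 * deriv (fun t' => M t' r) t / r) * (‖deriv (fun r' => f t r') r‖ ^ 2 + ‖p t r‖ ^ 2) + (1 - 2 * M t r / r) * (2 * ((deriv (fun r' => f t r') r).re * (deriv (fun r' => deriv (fun t' => f t' r') t) r).re + (deriv (fun r' => f t r') r).im * (deriv (fun r' => deriv (fun t' => f t' r') t) r).im) + 2 * ((p t r).re * (deriv (fun t' =>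 p t' r) t).re + (p t r).im * (deriv (fun t' => p t' r) t).im))) / Υ ^ 2)) t :=
    (hnf_t.add ((hφ_t.mul (hnfr_t.add hnp_t)).div_const (Υ ^ 2))).const_mul (4 * π * r ^ 2 * μ₀)
  have hA : HasDerivAt (fun r' => deriv (fun t' => M t' r') t) (4 * π * r ^ 2 * μ₀ * (2 * ((f t r).re * (p t r * (Real.exp (V t r) : ℂ) * (Real.sqrt (1 - 2 * M t r / r) : ℂ)).re + (f t r).im * (p t r * (Real.exp (V t r) : ℂ) * (Real.sqrt (1 - 2 * M t r / r) : ℂ)).im) + (-(2 * deriv (fun t' => M t' r) t / r) * (‖deriv (fun r' => f t r') r‖ ^ 2 + ‖p t r‖ ^ 2) + (1 - 2 * M t r / r) * (2 * ((deriv (fun r' => f t r') r).re * (deriv (fun r' => deriv (fun t' => f t' r') t) r).re + (deriv (fun r' => f t r') r).im * (deriv (fun r' => deriv (fun t' => f t' r') t) r).im) + 2 * ((p t r).re * (deriv (fun t' => p t' r) t).re + (p t r).im * (deriv (fun t' => p t' r) t).im))) / Υ ^ 2)) r := by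
    have h := mixed₁ hMs (t := t) hr
    have hfe : (fun t' => deriv (fun s => M t' s) r) = (fun t' => 4 * π * r ^ 2 * μ₀ *
        (‖f t' r‖ ^ 2 + (1 - 2 * M t' r / r) *
          (‖deriv (fun r' => f t' r') r‖ ^ 2 + ‖p t' r‖ ^ 2) / Υ ^ 2)) :=
      funext fun t' => hMr t' r hr
    have h2 : deriv (fun t' => deriv (fun s => M t' s) r) t = 4 * π * r ^ 2 * μ₀ * (2 * ((f t r).re * (p t r * (Real.exp (V t r) : ℂ) * (Real.sqrt (1 - 2 * M t r / r) : ℂ)).re + (f t r).im * (p t r * (Real.exp (V t r) : ℂ) * (Real.sqrt (1 - 2 * M t r / r) : ℂ)).im) + (-(2 * deriv (fun t' => M t' r) t / r) * (‖deriv (fun r' => f t r') r‖ ^ 2 + ‖p t r‖ ^ 2) + (1 - 2 * M t r / r) * (2 * ((deriv (fun r' => f t r') r).re * (deriv (fun r' => deriv (fun t' => f t' r') t) r).re + (deriv (fun r' => f t r') r).im * (deriv (fun r' => deriv (fun t' => f t' r') t) r).im) + 2 * ((p t r).re * (deriv (fun t' => p t' r) t).re + (p t r).im * (deriv (fun t'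 => p t' r) t).im))) / Υ ^ 2) := by
      rw [hfe]; exact hT.deriv
    rw [h2] at h
    exact h
  have hcomp_r : HasDerivAt (fun r' => (deriv (fun s => f t s) r').re * (p t r').re +
      (deriv (fun s => f t s) r').im * (p t r').im) (((deriv (fun r' => deriv (fun s => f t s) r') r).re * (p t r).re + (deriv (fun r' => f t r') r).re * (deriv (fun r' => p t r') r).re) + ((deriv (fun r' => deriv (fun s => f t s) r') r).im * (p t r).im + (deriv (fun r' => f t r') r).im * (deriv (fun r' => p t r') r).im)) r :=
    (hfr_r.creal.mul hp_r.creal).add (hfr_r.cimag.mul hp_r.cimag)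
  have hpow : HasDerivAt (fun r' => 8 * π * μ₀ / Υ ^ 2 * r' ^ 2) (8 * π * μ₀ / Υ ^ 2 * (2 * r)) r := by
    have h := (hasDerivAt_pow 2 r).const_mul (8 * π * μ₀ / Υ ^ 2)
    refine h.congr_deriv ?_
    norm_num
  have hB : HasDerivAt (fun r' => 8 * π * μ₀ / Υ ^ 2 * r' ^ 2 * Real.exp (V t r') * (1 - 2 * M t r' / r') *
      Real.sqrt (1 - 2 * M t r' / r') *
      ((deriv (fun s => f t s) r').re * (p t r').re +
        (deriv (fun s => f t s) r').im * (p t r').im)) ((((8 * π * μ₀ / Υ ^ 2 * (2 * r) * Real.exp (V t r) + 8 * π * μ₀ / Υ ^ 2 * r ^ 2 * (Real.exp (V t r) * deriv (fun r' => V t r') r)) * (1 - 2 * M t r / r) + 8 * π * μ₀ / Υ ^ 2 * r ^ 2 * Real.exp (V t r) * (2 * M t r / r ^ 2 - 2 * deriv (fun r' => M t r') r / r)) * Real.sqrt (1 - 2 * M t r / r) + 8 * π * μ₀ / Υ ^ 2 * r ^ 2 * Real.exp (V t r) * (1 - 2 * M t r / r) * ((2 * M t r / r ^ 2 - 2 *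 deriv (fun r' => M t r') r / r) / (2 * Real.sqrt (1 - 2 * M t r / r)))) * ((deriv (fun s => f t s) r).re * (p t r).re + (deriv (fun s => f t s) r).im * (p t r).im) + 8 * π * μ₀ / Υ ^ 2 * r ^ 2 * Real.exp (V t r) * (1 - 2 * M t r / r) * Real.sqrt (1 - 2 * M t r / r) * ((((deriv (fun r' => deriv (fun s => f t s) r') r).re * (p t r).re + (deriv (fun r' => f t r') r).re * (deriv (fun r' => p t r') r).re) + ((deriv (fun r' => deriv (fun s => f t s) r') r).im * (p t r).im + (deriv (fun r' => f t r') r).im * (deriv (fun r' => p t r') r).im)))) r :=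
    (((hpow.mul he_r).mul hφ_r).mul hs_r).mul hcomp_r
  have hC : HasDerivAt (fun r' => Real.exp (V t r') / Real.sqrt (1 - 2 * M t r' / r'))
      ((Real.exp (V t r) * deriv (fun r' => V t r') r * Real.sqrt (1 - 2 * M t r / r) - Real.exp (V t r) * ((2 * M t r / r ^ 2 - 2 * deriv (fun r' => M t r') r / r) / (2 * Real.sqrt (1 - 2 * M t r / r)))) / Real.sqrt (1 - 2 * M t r / r) ^ 2) r := he_r.div hs_r hspos.ne'
  have hH : HasDerivAt (fun r' => (deriv (fun t' => M t' r') t -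
      8 * π * μ₀ / Υ ^ 2 * r' ^ 2 * Real.exp (V t r') * (1 - 2 * M t r' / r') *
      Real.sqrt (1 - 2 * M t r' / r') *
      ((deriv (fun s => f t s) r').re * (p t r').re +
        (deriv (fun s => f t s) r').im * (p t r').im)) *
      (Real.exp (V t r') / Real.sqrt (1 - 2 * M t r' / r')))
      ((4 * π * r ^ 2 * μ₀ * (2 * ((f t r).re * (p t r * (Real.exp (V t r) : ℂ) * (Real.sqrt (1 - 2 * M t r / r) : ℂ)).re + (f t r).im * (p t r * (Real.exp (V t r) : ℂ) * (Real.sqrt (1 - 2 * M t r / r) : ℂ)).im) + (-(2 * deriv (fun t' => M t' r) t / r) * (‖deriv (fun r' => f t r') r‖ ^ 2 + ‖p t r‖ ^ 2) + (1 - 2 * M t r / r) * (2 * ((deriv (fun r' => f t r') r).re * (deriv (fun r' => deriv (fun t' => f t' r') t) r).re + (deriv (fun r' => f t r') r).im * (deriv (fun r' => deriv (fun t' => f t' r') t) r).im) + 2 * ((p t r).re * (deriv (fun t' => p t' r) t).re + (p t r).im * (deriv (fun t' => p t' r) t).im))) / Υ ^ 2) - ((((8 * π * μ₀ / Υ ^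 2 * (2 * r) * Real.exp (V t r) + 8 * π * μ₀ / Υ ^ 2 * r ^ 2 * (Real.exp (V t r) * deriv (fun r' => V t r') r)) * (1 - 2 * M t r / r) + 8 * π * μ₀ / Υ ^ 2 * r ^ 2 * Real.exp (V t r) * (2 * M t r / r ^ 2 - 2 * deriv (fun r' => M t r') r / r)) * Real.sqrt (1 - 2 * M t r / r) + 8 * π * μ₀ / Υ ^ 2 * r ^ 2 * Real.exp (V t r) * (1 - 2 * M t r / r) * ((2 * M t r / r ^ 2 - 2 * deriv (fun r' => M t r') r / r) / (2 * Real.sqrt (1 - 2 * M t r / r)))) * ((deriv (fun s => f t s) r).re * (p t r).re + (deriv (fun s => f t s) r).im * (p t r).im) + 8 * π * μ₀ / Υ ^ 2 * r ^ 2 * Real.exp (V t r) * (1 - 2 * M t r / r) * Real.sqrt (1 - 2 * M t r / r) * ((((deriv (fun r' => deriv (fun s => f t s) r') r).re * (p t r).re + (deriv (fun r' => f t r') r).re * (deriv (fun r' => p t r') r).re) + ((deriv (fun r' => deriv (fun s => f t s) r') r).im * (p t r).im + (deriv (fun r' => f t r') r).im * (deriv (fun r' => p t r') r).im))))) * (Real.exp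 (V t r) / Real.sqrt (1 - 2 * M t r / r)) + (deriv (fun t' => M t' r) t - 8 * π * μ₀ / Υ ^ 2 * r ^ 2 * Real.exp (V t r) * (1 - 2 * M t r / r) * Real.sqrt (1 - 2 * M t r / r) * ((deriv (fun s => f t s) r).re * (p t r).re + (deriv (fun s => f t s) r).im * (p t r).im)) * ((Real.exp (V t r) * deriv (fun r' => V t r') r * Real.sqrt (1 - 2 * M t r / r) - Real.exp (V t r) * ((2 * M t r / r ^ 2 - 2 * deriv (fun r' => M t r') r / r) / (2 * Real.sqrt (1 - 2 * M t r / r)))) / Real.sqrt (1 - 2 * M t r / r) ^ 2)) r := (hA.sub hB).mul hC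
  have hzero : ((4 * π * r ^ 2 * μ₀ * (2 * ((f t r).re * (p t r * (Real.exp (V t r) : ℂ) * (Real.sqrt (1 - 2 * M t r / r) : ℂ)).re + (f t r).im * (p t r * (Real.exp (V t r) : ℂ) * (Real.sqrt (1 - 2 * M t r / r) : ℂ)).im) + (-(2 * deriv (fun t' => M t' r) t / r) * (‖deriv (fun r' => f t r') r‖ ^ 2 + ‖p t r‖ ^ 2) + (1 - 2 * M t r / r) * (2 * ((deriv (fun r' => f t r') r).re * (deriv (fun r' => deriv (fun t' => f t' r') t) r).re + (deriv (fun r' => f t r') r).im * (deriv (fun r' => deriv (fun t' => f t' r') t) r).im) + 2 * ((p t r).re * (deriv (fun t' => p t' r) t).re + (p t r).im * (deriv (fun t' => p t' r) t).im))) / Υ ^ 2) - ((((8 * π * μ₀ / Υ ^ 2 * (2 * r) * Real.exp (V t r) + 8 * π * μ₀ / Υ ^ 2 * r ^ 2 * (Real.exp (V t r) * deriv (fun r' => V t r') r)) * (1 - 2 * M t r / r) + 8 * π * μ₀ / Υ ^ 2 * r ^ 2 * Real.exp (V t r) * (2 * M t r / r ^ 2 - 2 * deriv (fun r' => M t r')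 r / r)) * Real.sqrt (1 - 2 * M t r / r) + 8 * π * μ₀ / Υ ^ 2 * r ^ 2 * Real.exp (V t r) * (1 - 2 * M t r / r) * ((2 * M t r / r ^ 2 - 2 * deriv (fun r' => M t r') r / r) / (2 * Real.sqrt (1 - 2 * M t r / r)))) * ((deriv (fun s => f t s) r).re * (p t r).re + (deriv (fun s => f t s) r).im * (p t r).im) + 8 * π * μ₀ / Υ ^ 2 * r ^ 2 * Real.exp (V t r) * (1 - 2 * M t r / r) * Real.sqrt (1 - 2 * M t r / r) * ((((deriv (fun r' => deriv (fun s => f t s) r') r).re * (p t r).re + (deriv (fun r' => f t r') r).re * (deriv (fun r' => p t r') r).re) + ((deriv (fun r' => deriv (fun s => f t s) r') r).im * (p t r).im + (deriv (fun r' => f t r') r).im * (deriv (fun r' => p t r') r).im))))) * (Real.exp (V t r) / Real.sqrt (1 - 2 * M t r / r)) + (deriv (fun t' => M t' r) t - 8 * π * μ₀ / Υ ^ 2 * r ^ 2 * Real.exp (V t r) * (1 - 2 * M t r / r) * Real.sqrt (1 - 2 * M t r / r) * ((deriv (fun s => f t s) r).re * (p t r).re + (deriv (fun s => f t s) r).im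 * (p t r).im)) * ((Real.exp (V t r) * deriv (fun r' => V t r') r * Real.sqrt (1 - 2 * M t r / r) - Real.exp (V t r) * ((2 * M t r / r ^ 2 - 2 * deriv (fun r' => M t r') r / r) / (2 * Real.sqrt (1 - 2 * M t r / r)))) / Real.sqrt (1 - 2 * M t r / r) ^ 2)) = 0 := by
    rw [hftr_eq, hpt t r hr, hdfi_eq, hMr t r hr, hVr t r hr]
    simp only [cnormsq, Complex.add_re, Complex.add_im, Complex.mul_re, Complex.mul_im,
      Complex.ofReal_re, Complex.ofReal_im, Complex.neg_re, Complex.neg_im,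
      ← Complex.ofReal_pow, ← Complex.ofReal_inv, Complex.re_ofNat, Complex.im_ofNat,
      div_eq_mul_inv, ← Complex.ofReal_inv]
    simp only [← div_eq_mul_inv (2 * M t r) r]
    generalize hsq : Real.sqrt (1 - 2 * M t r / r) = sq at *
    have hM_elim : M t r = (r - r * sq ^ 2) / 2 := by
      field_simp at hs2; nlinarith [hs2]
    rw [hM_elim]
    have hsne : sq ≠ 0 := ne_of_gt hspos
    have hrne : (r:ℝ) ≠ 0 := hr.ne'
    have hΥne : Υ ≠ 0 := hΥ.ne'
    field_simp
    ring
  rw [← hzero]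
  exact hH


theorem keyA
    {M V : ℝ → ℝ → ℝ} {f p : ℝ → ℝ → ℂ} {μ₀ Υ : ℝ} (hΥ : 0 < Υ)
    (hMs : ContDiffOn ℝ (⊤ : ℕ∞) (uncurry M) S) (hVs : ContDiffOn ℝ (⊤ : ℕ∞) (uncurry V) S)
    (hfs : ContDiffOn ℝ (⊤ : ℕ∞) (uncurry f) S) (hps : ContDiffOn ℝ (⊤ : ℕ∞) (uncurry p) S)
    (hM0 : ∀ t : ℝ, M t 0 = 0)
    (h2M : ∀ t : ℝ, ∀ r > (0:ℝ), 2 * M t r < r)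
    (hMr : ∀ t : ℝ, ∀ r > (0:ℝ),
      deriv (fun r' => M t r') r =
        4 * π * r ^ 2 * μ₀ * (‖f t r‖ ^ 2 +
          Phi M t r * (‖deriv (fun r' => f t r') r‖ ^ 2 + ‖p t r‖ ^ 2) / Υ ^ 2))
    (hVr : ∀ t : ℝ, ∀ r > (0:ℝ),
      deriv (fun r' => V t r') r =
        (Phi M t r)⁻¹ * (M t r / r ^ 2 -
          4 * π * r * μ₀ * (‖f t r‖ ^ 2 -
            Phi M t r * (‖deriv (fun r' => f t r') r‖ ^ 2 + ‖p t r‖ ^ 2) / Υ ^ 2)))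
    (hft : ∀ t : ℝ, ∀ r > (0:ℝ),
      deriv (fun t' => f t' r) t =
        p t r * (Real.exp (V t r) : ℂ) * (Real.sqrt (Phi M t r) : ℂ))
    (hpt : ∀ t : ℝ, ∀ r > (0:ℝ),
      deriv (fun t' => p t' r) t =
        (Real.exp (V t r) : ℂ) *
          (-(Υ : ℂ) ^ 2 * f t r * ((Real.sqrt (Phi M t r) : ℂ))⁻¹ +
            2 * deriv (fun r' => f t r') r / (r : ℂ) * (Real.sqrt (Phi M t r) : ℂ)) +
        deriv (fun r' =>
          (Real.exp (V t r') : ℂ) * deriv (fun s => f t s) r' *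
            (Real.sqrt (Phi M t r') : ℂ)) r)
    (t : ℝ) {r : ℝ} (hr : 0 < r) :
    deriv (fun t' => M t' r) t = Ff M V f p μ₀ Υ t r := by
  have hH := fun (r' : ℝ) (hr' : 0 < r') =>
    hasDerivAt_H hΥ hMs hVs hfs hps h2M hMr hVr hft hpt t hr'
  set Hn : ℝ → ℝ := fun r' => (deriv (fun t' => M t' r') t - Ff M V f p μ₀ Υ t r') *
      (Real.exp (V t r') / Real.sqrt (1 - 2 * M t r' / r')) with hHn
  -- (i) constancy
  have hconst : ∀ a, 0 < a → a ≤ r → Hn r = Hn a := by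
    intro a ha har
    have hcont : ContinuousOn Hn (Icc a r) := fun x hx =>
      ((hH x (lt_of_lt_of_le ha hx.1)).continuousAt).continuousWithinAt
    have hderiv : ∀ x ∈ Ico a r, HasDerivWithinAt Hn 0 (Ici x) x := fun x hx =>
      (hH x (lt_of_lt_of_le ha hx.1)).hasDerivWithinAt
    exact constant_of_has_deriv_right_zero hcont hderiv r (right_mem_Icc.mpr har)
  have heq : Tendsto Hn (𝓝[>] 0) (𝓝 (Hn r)) := by
    apply tendsto_const_nhds.congr'
    filter_upwards [Ioc_mem_nhdsGT_of_mem (show (0:ℝ) ∈ Ico (0:ℝ) r from ⟨le_rfl, hr⟩)] with a ha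
    exact hconst a ha.1 ha.2
  -- (ii) boundary limits
  -- the t-partial of M tends to 0
  have l1val : fderivWithin ℝ (uncurry M) S (t, 0) (1, 0) = 0 := by
    have hb := hasDerivAt_slice_t_boundary hMs t
    have hz : (fun t' => M t' 0) = fun _ => (0:ℝ) := funext fun t' => hM0 t'
    rw [hz] at hb
    exact hb.unique (hasDerivAt_const t 0)
  have l1 : Tendsto (fun r' => deriv (fun t' => M t' r') t) (𝓝[>] 0) (𝓝 0) := by
    have h : Tendsto (fun r' => deriv (fun t' => M t' r') t) (𝓝[>] 0)
        (𝓝 (fderivWithin ℝ (uncurry M) S (t, 0) (1, 0))) := by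
      refine (tendsto_fderiv_boundary hMs t (1, 0)).congr' ?_
      filter_upwards [self_mem_nhdsWithin] with r' hr'
      exact (deriv_slice_t hMs hr').symm
    rwa [l1val] at h
  -- slope limit for M
  have l2 : Tendsto (fun r' => M t r' / r') (𝓝[>] 0)
      (𝓝 (fderivWithin ℝ (uncurry M) S (t, 0) (0, 1))) := by
    have hsl := hasDerivWithinAt_slice_r_boundary hMs t
    rw [hasDerivWithinAt_iff_tendsto_slope, Ici_sdiff_left] at hsl
    refine hsl.congr' ?_
    filter_upwards [self_mem_nhdsWithin] with r' _
    rw [slope_def_field, hM0 t]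
    ring
  have l3 : Tendsto (fun r' => 1 - 2 * M t r' / r') (𝓝[>] 0)
      (𝓝 (1 - 2 * fderivWithin ℝ (uncurry M) S (t, 0) (0, 1))) := by
    have h2 : Tendsto (fun r' => 2 * (M t r' / r')) (𝓝[>] 0)
        (𝓝 (2 * fderivWithin ℝ (uncurry M) S (t, 0) (0, 1))) := l2.const_mul 2
    have h1 : Tendsto (fun _ : ℝ => (1:ℝ)) (𝓝[>] 0) (𝓝 1) := tendsto_const_nhds
    have := h1.sub h2
    refine this.congr' ?_
    filter_upwards [self_mem_nhdsWithin] with r' _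
    ring
  have l4 : Tendsto (fun r' => deriv (fun s => M t s) r') (𝓝[>] 0)
      (𝓝 (fderivWithin ℝ (uncurry M) S (t, 0) (0, 1))) := by
    refine (tendsto_fderiv_boundary hMs t (0, 1)).congr' ?_
    filter_upwards [self_mem_nhdsWithin] with r' hr'
    exact (deriv_slice_r hMs hr').symm
  -- value limits of fields
  have lf : Tendsto (fun r' => f t r') (𝓝[>] 0) (𝓝 (f t 0)) := tendsto_slice_boundary hfs t
  have lp : Tendsto (fun r' => p t r') (𝓝[>] 0) (𝓝 (p t 0)) := tendsto_slice_boundary hps t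
  have lV : Tendsto (fun r' => V t r') (𝓝[>] 0) (𝓝 (V t 0)) := tendsto_slice_boundary hVs t
  have lfr : Tendsto (fun r' => deriv (fun s => f t s) r') (𝓝[>] 0)
      (𝓝 (fderivWithin ℝ (uncurry f) S (t, 0) (0, 1))) := by
    refine (tendsto_fderiv_boundary hfs t (0, 1)).congr' ?_
    filter_upwards [self_mem_nhdsWithin] with r' hr'
    exact (deriv_slice_r hfs hr').symm
  have lr2 : Tendsto (fun r' : ℝ => r' ^ 2) (𝓝[>] 0) (𝓝 ((0:ℝ) ^ 2)) :=
    ((continuous_pow 2).tendsto (0:ℝ)).mono_left nhdsWithin_le_nhds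
  -- λ = 0
  have hlam : fderivWithin ℝ (uncurry M) S (t, 0) (0, 1) = 0 := by
    have hRHS : Tendsto (fun r' => 4 * π * r' ^ 2 * μ₀ * (‖f t r'‖ ^ 2 +
        (1 - 2 * M t r' / r') * (‖deriv (fun s => f t s) r'‖ ^ 2 + ‖p t r'‖ ^ 2) / Υ ^ 2))
        (𝓝[>] 0) (𝓝 (4 * π * (0:ℝ) ^ 2 * μ₀ * (‖f t 0‖ ^ 2 +
        (1 - 2 * fderivWithin ℝ (uncurry M) S (t, 0) (0, 1)) *
          (‖fderivWithin ℝ (uncurry f) S (t, 0) (0, 1)‖ ^ 2 + ‖p t 0‖ ^ 2) / Υ ^ 2))) := by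
      have lc : Tendsto (fun _ : ℝ => 4 * π) (𝓝[>] (0:ℝ)) (𝓝 (4 * π)) := tendsto_const_nhds
      have lc2 : Tendsto (fun _ : ℝ => μ₀) (𝓝[>] (0:ℝ)) (𝓝 μ₀) := tendsto_const_nhds
      exact ((lc.mul lr2).mul lc2).mul
        (((lf.norm.pow 2).add (((l3.mul ((lfr.norm.pow 2).add (lp.norm.pow 2))).div_const (Υ ^ 2)))))
    have l4' : Tendsto (fun r' => deriv (fun s => M t s) r') (𝓝[>] 0)
        (𝓝 (4 * π * (0:ℝ) ^ 2 * μ₀ * (‖f t 0‖ ^ 2 +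
        (1 - 2 * fderivWithin ℝ (uncurry M) S (t, 0) (0, 1)) *
          (‖fderivWithin ℝ (uncurry f) S (t, 0) (0, 1)‖ ^ 2 + ‖p t 0‖ ^ 2) / Υ ^ 2))) := by
      refine hRHS.congr' ?_
      filter_upwards [self_mem_nhdsWithin] with r' hr'
      have h := hMr t r' hr'
      simp only [Phi] at h
      exact h.symm
    have := tendsto_nhds_unique l4 l4'
    rw [this]; ring
  rw [hlam] at l3
  have l3' : Tendsto (fun r' => 1 - 2 * M t r' / r') (𝓝[>] 0) (𝓝 1) := by
    convert l3 using 2; norm_num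
  -- limit of Ff
  have lFf : Tendsto (fun r' => Ff M V f p μ₀ Υ t r') (𝓝[>] 0) (𝓝 0) := by
    have lexp : Tendsto (fun r' => Real.exp (V t r')) (𝓝[>] 0) (𝓝 (Real.exp (V t 0))) :=
      (Real.continuous_exp.tendsto (V t 0)).comp lV
    have lsq : Tendsto (fun r' => Real.sqrt (1 - 2 * M t r' / r')) (𝓝[>] 0) (𝓝 (Real.sqrt 1)) :=
      (Real.continuous_sqrt.tendsto 1).comp l3'
    have lcomp : Tendsto (fun r' => (deriv (fun s => f t s) r').re * (p t r').re +
        (deriv (fun s => f t s) r').im * (p t r').im) (𝓝[>] 0)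
        (𝓝 ((fderivWithin ℝ (uncurry f) S (t, 0) (0, 1)).re * (p t 0).re +
          (fderivWithin ℝ (uncurry f) S (t, 0) (0, 1)).im * (p t 0).im)) := by
      exact (((Complex.continuous_re.tendsto _).comp lfr).mul
          ((Complex.continuous_re.tendsto _).comp lp)).add
        (((Complex.continuous_im.tendsto _).comp lfr).mul
          ((Complex.continuous_im.tendsto _).comp lp))
    have lc : Tendsto (fun _ : ℝ => 8 * π * μ₀ / Υ ^ 2) (𝓝[>] (0:ℝ)) (𝓝 (8 * π * μ₀ / Υ ^ 2)) :=
      tendsto_const_nhds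
    have hbig := ((((lc.mul lr2).mul lexp).mul l3').mul lsq).mul lcomp
    have : Tendsto (fun r' => Ff M V f p μ₀ Υ t r') (𝓝[>] 0)
        (𝓝 (8 * π * μ₀ / Υ ^ 2 * (0:ℝ) ^ 2 * Real.exp (V t 0) * 1 * Real.sqrt 1 *
          ((fderivWithin ℝ (uncurry f) S (t, 0) (0, 1)).re * (p t 0).re +
            (fderivWithin ℝ (uncurry f) S (t, 0) (0, 1)).im * (p t 0).im))) := by
      simp only [Ff]
      exact hbig
    convert this using 2
    ring
  -- limit of the weight
  have lW : Tendsto (fun r' => Real.exp (V t r') / Real.sqrt (1 - 2 * M t r' / r')) (𝓝[>] 0)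
      (𝓝 (Real.exp (V t 0) / Real.sqrt 1)) := by
    have lexp : Tendsto (fun r' => Real.exp (V t r')) (𝓝[>] 0) (𝓝 (Real.exp (V t 0))) :=
      (Real.continuous_exp.tendsto (V t 0)).comp lV
    have lsq : Tendsto (fun r' => Real.sqrt (1 - 2 * M t r' / r')) (𝓝[>] 0) (𝓝 (Real.sqrt 1)) :=
      (Real.continuous_sqrt.tendsto 1).comp l3'
    exact lexp.div lsq (by rw [Real.sqrt_one]; norm_num)
  have h0 : Tendsto Hn (𝓝[>] 0) (𝓝 0) := by
    have := (l1.sub lFf).mul lW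
    convert this using 2
    norm_num
  -- combine
  have hHr0 : Hn r = 0 := tendsto_nhds_unique heq h0
  have hφpos : 0 < 1 - 2 * M t r / r := phi_pos h2M t hr
  have hWne : Real.exp (V t r) / Real.sqrt (1 - 2 * M t r / r) ≠ 0 :=
    div_ne_zero (Real.exp_ne_zero _) (Real.sqrt_pos.mpr hφpos).ne'
  have := mul_eq_zero.mp hHr0
  rcases this with h | h
  · exact sub_eq_zero.mp h
  · exact absurd h hWne


theorem stmt_16 (M V : ℝ → ℝ → ℝ) (f p : ℝ → ℝ → ℂ) (μ₀ Υ : ℝ)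
    (hμ₀ : 0 < μ₀) (hΥ : 0 < Υ)
    (hMsmooth : ContDiffOn ℝ (⊤ : ℕ∞) (Function.uncurry M) (Set.univ ×ˢ Set.Ici 0))
    (hVsmooth : ContDiffOn ℝ (⊤ : ℕ∞) (Function.uncurry V) (Set.univ ×ˢ Set.Ici 0))
    (hfsmooth : ContDiffOn ℝ (⊤ : ℕ∞) (Function.uncurry f) (Set.univ ×ˢ Set.Ici 0))
    (hpsmooth : ContDiffOn ℝ (⊤ : ℕ∞) (Function.uncurry p) (Set.univ ×ˢ Set.Ici 0))
    (hM0 : ∀ t : ℝ, M t 0 = 0)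
    (h2M : ∀ t : ℝ, ∀ r > (0:ℝ), 2 * M t r < r)
    (hMr : ∀ t : ℝ, ∀ r > (0:ℝ),
      deriv (fun r' => M t r') r =
        4 * π * r ^ 2 * μ₀ * (‖f t r‖ ^ 2 +
          Phi M t r * (‖deriv (fun r' => f t r') r‖ ^ 2 + ‖p t r‖ ^ 2) / Υ ^ 2))
    (hVr : ∀ t : ℝ, ∀ r > (0:ℝ),
      deriv (fun r' => V t r') r =
        (Phi M t r)⁻¹ * (M t r / r ^ 2 -
          4 * π * r * μ₀ * (‖f t r‖ ^ 2 -
            Phi M t r * (‖deriv (fun r' => f t r') r‖ ^ 2 + ‖p t r‖ ^ 2) / Υ ^ 2)))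
    (hft : ∀ t : ℝ, ∀ r > (0:ℝ),
      deriv (fun t' => f t' r) t =
        p t r * (Real.exp (V t r) : ℂ) * (Real.sqrt (Phi M t r) : ℂ))
    (hpt : ∀ t : ℝ, ∀ r > (0:ℝ),
      deriv (fun t' => p t' r) t =
        (Real.exp (V t r) : ℂ) *
          (-(Υ : ℂ) ^ 2 * f t r * ((Real.sqrt (Phi M t r) : ℂ))⁻¹ +
            2 * deriv (fun r' => f t r') r / (r : ℂ) * (Real.sqrt (Phi M t r) : ℂ)) +
        deriv (fun r' =>
          (Real.exp (V t r') : ℂ) * deriv (fun s => f t s) r' *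
            (Real.sqrt (Phi M t r') : ℂ)) r) :
    ∀ t : ℝ, ∀ r > (0:ℝ),
      deriv (fun t' => V t' r) t * deriv (fun t' => M t' r) t =
        -r * Real.exp (2 * V t r) *
          ((deriv (fun r' => deriv (fun s => V t s) r') r +
              (deriv (fun r' => V t r') r) ^ 2 + deriv (fun r' => V t r') r / r) *
              (Phi M t r) ^ 2 -
            3 * (deriv (fun t' => M t' r) t) ^ 2 / (r ^ 2 * Real.exp (2 * V t r)) *
              (Phi M t r)⁻¹ -
            deriv (fun t' => deriv (fun s => M s r) t') t / (r * Real.exp (2 * V t r)) +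
            (M t r / r - deriv (fun r' => M t r') r) *
              (1 / r ^ 2 + deriv (fun r' => V t r') r / r) * Phi M t r +
            8 * π * μ₀ * Phi M t r * (‖f t r‖ ^ 2 +
              Phi M t r * (‖deriv (fun r' => f t r') r‖ ^ 2 - ‖p t r‖ ^ 2) / Υ ^ 2)) := by
  intro t r hr
  have hMt_eq : ∀ t' : ℝ, ∀ r' : ℝ, 0 < r' →
      deriv (fun t'' => M t'' r') t' = Ff M V f p μ₀ Υ t' r' := fun t' r' hr' =>
    keyA hΥ hMsmooth hVsmooth hfsmooth hpsmooth hM0 h2M hMr hVr hft hpt t' hr'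
  have hMr' := hMr; have hVr' := hVr; have hft' := hft; have hpt' := hpt
  simp only [Phi] at hMr' hVr' hft' hpt' ⊢
  have hφpos : 0 < 1 - 2 * M t r / r := phi_pos h2M t hr
  have hspos : 0 < Real.sqrt (1 - 2 * M t r / r) := Real.sqrt_pos.mpr hφpos
  have hs2 : Real.sqrt (1 - 2 * M t r / r) ^ 2 = 1 - 2 * M t r / r := Real.sq_sqrt hφpos.le
  -- r-direction derivatives
  have hM_r : HasDerivAt (fun r' => M t r') (deriv (fun r' => M t r') r) r := hasDerivAt_slice_r' hMsmooth hr
  have hV_r : HasDerivAt (fun r' => V t r') (deriv (fun r' => V t r') r) r := hasDerivAt_slice_r' hVsmooth hr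
  have hf_r : HasDerivAt (fun r' => f t r') (deriv (fun r' => f t r') r) r := hasDerivAt_slice_r' hfsmooth hr
  have hp_r : HasDerivAt (fun r' => p t r') (deriv (fun r' => p t r') r) r := hasDerivAt_slice_r' hpsmooth hr
  have hfr_r : HasDerivAt (fun r' => deriv (fun s => f t s) r') (deriv (fun r' => deriv (fun s => f t s) r') r) r :=
    hasDerivAt_deriv_r hfsmooth hr
  have hφ_r : HasDerivAt (fun r' => 1 - 2 * M t r' / r') (2 * M t r / r ^ 2 - 2 * deriv (fun r' => M t r') r / r) r := by
    have h := ((hM_r.const_mul 2).div (hasDerivAt_id r) hr.ne').const_sub 1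
    refine h.congr_deriv ?_
    simp only [id]
    all_goals field_simp
    all_goals try ring
  have hs_r : HasDerivAt (fun r' => Real.sqrt (1 - 2 * M t r' / r')) ((2 * M t r / r ^ 2 - 2 * deriv (fun r' => M t r') r / r) / (2 * Real.sqrt (1 - 2 * M t r / r))) r :=
    hφ_r.sqrt hφpos.ne'
  have he_r : HasDerivAt (fun r' => Real.exp (V t r')) (Real.exp (V t r) * deriv (fun r' => V t r') r) r := hV_r.exp
  have hef : HasDerivAt (fun r' => ((Real.exp (V t r') : ℝ) : ℂ)) ((Real.exp (V t r) * deriv (fun r' => V t r') r : ℝ) : ℂ) r := he_r.ofReal_comp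
  have hsf : HasDerivAt (fun r' => ((Real.sqrt (1 - 2 * M t r' / r') : ℝ) : ℂ)) ((((2 * M t r / r ^ 2 - 2 * deriv (fun r' => M t r') r / r) / (2 * Real.sqrt (1 - 2 * M t r / r))) : ℝ) : ℂ) r :=
    hs_r.ofReal_comp
  -- t-direction derivatives
  have hM_t : HasDerivAt (fun t' => M t' r) (deriv (fun t' => M t' r) t) t := hasDerivAt_slice_t' hMsmooth hr
  have hp_t : HasDerivAt (fun t' => p t' r) (deriv (fun t' => p t' r) t) t := hasDerivAt_slice_t' hpsmooth hr
  have hfr_t : HasDerivAt (fun t' => deriv (fun s => f t' s) r) (deriv (fun r' => deriv (fun t' => f t' r') t) r) t := mixed₂ hfsmooth hr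
  have hφ_t : HasDerivAt (fun t' => 1 - 2 * M t' r / r) (-(2 * deriv (fun t' => M t' r) t / r)) t := by
    have h := ((hM_t.const_mul 2).div_const r).const_sub 1
    convert h using 1
    try ring
  have hs_t : HasDerivAt (fun t' => Real.sqrt (1 - 2 * M t' r / r)) (-(2 * deriv (fun t' => M t' r) t / r) / (2 * Real.sqrt (1 - 2 * M t r / r))) t :=
    hφ_t.sqrt hφpos.ne'
  have he_t : HasDerivAt (fun t' => Real.exp (V t' r)) (Real.exp (V t r) * deriv (fun t' => V t' r) t) t :=
    (hasDerivAt_slice_t' hVsmooth hr).exp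
  -- complex mixed derivative values
  have hftr_eq : deriv (fun r' => deriv (fun t' => f t' r') t) r = ((deriv (fun r' => p t r') r * ((Real.exp (V t r) : ℝ) : ℂ) + p t r * ((Real.exp (V t r) * deriv (fun r' => V t r') r : ℝ) : ℂ)) * ((Real.sqrt (1 - 2 * M t r / r) : ℝ) : ℂ) + p t r * ((Real.exp (V t r) : ℝ) : ℂ) * ((((2 * M t r / r ^ 2 - 2 * deriv (fun r' => M t r') r / r) / (2 * Real.sqrt (1 - 2 * M t r / r))) : ℝ) : ℂ)) := by
    have hprod := (hp_r.mul hef).mul hsf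
    have heve : (fun r' => deriv (fun t' => f t' r') t) =ᶠ[𝓝 r]
        (fun r' => p t r' * ((Real.exp (V t r') : ℝ) : ℂ) *
          ((Real.sqrt (1 - 2 * M t r' / r') : ℝ) : ℂ)) := by
      filter_upwards [Ioi_mem_nhds hr] with r' hr' using hft' t r' hr'
    rw [heve.deriv_eq]
    exact hprod.deriv
  have hdfi_eq : deriv (fun r' => ((Real.exp (V t r') : ℝ) : ℂ) * deriv (fun s => f t s) r' *
      ((Real.sqrt (1 - 2 * M t r' / r') : ℝ) : ℂ)) r = ((((Real.exp (V t r) * deriv (fun r' => V t r') r : ℝ) : ℂ) * deriv (fun r' => f t r') r + ((Real.exp (V t r) : ℝ) : ℂ) * deriv (fun r' => deriv (fun s => f t s) r') r) * ((Real.sqrt (1 - 2 * M t r / r) : ℝ) : ℂ) + ((Real.exp (V t r) : ℝ) : ℂ) * deriv (fun r' => f t r') r * ((((2 * M t r / r ^ 2 - 2 * deriv (fun r' => M t r') r / r) / (2 * Real.sqrt (1 - 2 * M t r / r))) : ℝ) : ℂ)) :=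
    ((hef.mul hfr_r).mul hsf).deriv
  -- M_tt via t-derivative of Ff
  have hcomp_t : HasDerivAt (fun t' => (deriv (fun s => f t' s) r).re * (p t' r).re +
      (deriv (fun s => f t' s) r).im * (p t' r).im) (((deriv (fun r' => deriv (fun t' => f t' r') t) r).re * (p t r).re + (deriv (fun r' => f t r') r).re * (deriv (fun t' => p t' r) t).re) + ((deriv (fun r' => deriv (fun t' => f t' r') t) r).im * (p t r).im + (deriv (fun r' => f t r') r).im * (deriv (fun t' => p t' r) t).im)) t :=
    (hfr_t.creal.mul hp_t.creal).add (hfr_t.cimag.mul hp_t.cimag)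
  have hFf_t : HasDerivAt (fun t' => 8 * π * μ₀ / Υ ^ 2 * r ^ 2 * Real.exp (V t' r) * (1 - 2 * M t' r / r) *
      Real.sqrt (1 - 2 * M t' r / r) *
      ((deriv (fun s => f t' s) r).re * (p t' r).re +
        (deriv (fun s => f t' s) r).im * (p t' r).im)) (((8 * π * μ₀ / Υ ^ 2 * r ^ 2 * (Real.exp (V t r) * deriv (fun t' => V t' r) t) * (1 - 2 * M t r / r) + 8 * π * μ₀ / Υ ^ 2 * r ^ 2 * Real.exp (V t r) * (-(2 * deriv (fun t' => M t' r) t / r))) * Real.sqrt (1 - 2 * M t r / r) + 8 * π * μ₀ / Υ ^ 2 * r ^ 2 * Real.exp (V t r) * (1 - 2 * M t r / r) * (-(2 * deriv (fun t' => M t' r) t / r) / (2 * Real.sqrt (1 - 2 * M t r / r)))) * ((deriv (fun s => f t s) r).re * (p t r).re + (deriv (fun s => f t s) r).im * (p t r).im) + 8 * π * μ₀ / Υ ^ 2 * r ^ 2 * Real.exp (V t r) * (1 - 2 * M t r / r) * Real.sqrt (1 - 2 * M t r / r) * (((deriv (fun r' => deriv (fun t' => f t' r') t) r).re * (p t r).re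 + (deriv (fun r' => f t r') r).re * (deriv (fun t' => p t' r) t).re) + ((deriv (fun r' => deriv (fun t' => f t' r') t) r).im * (p t r).im + (deriv (fun r' => f t r') r).im * (deriv (fun t' => p t' r) t).im))) t :=
    ((((he_t.const_mul (8 * π * μ₀ / Υ ^ 2 * r ^ 2)).mul hφ_t).mul hs_t).mul hcomp_t)
  have hMtt : deriv (fun t' => deriv (fun s => M s r) t') t = (((8 * π * μ₀ / Υ ^ 2 * r ^ 2 * (Real.exp (V t r) * deriv (fun t' => V t' r) t) * (1 - 2 * M t r / r) + 8 * π * μ₀ / Υ ^ 2 * r ^ 2 * Real.exp (V t r) * (-(2 * deriv (fun t' => M t' r) t / r))) * Real.sqrt (1 - 2 * M t r / r) + 8 * π * μ₀ / Υ ^ 2 * r ^ 2 * Real.exp (V t r) * (1 - 2 * M t r / r) * (-(2 * deriv (fun t' => M t' r) t / r) / (2 * Real.sqrt (1 - 2 * M t r / r)))) * ((deriv (fun s => f t s) r).re * (p t r).re + (deriv (fun s => f t s) r).im * (p t r).im) + 8 * π * μ₀ / Υ ^ 2 * r ^ 2 * Real.exp (V t r) * (1 - 2 * M t r / r) * Real.sqrt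 (1 - 2 * M t r / r) * (((deriv (fun r' => deriv (fun t' => f t' r') t) r).re * (p t r).re + (deriv (fun r' => f t r') r).re * (deriv (fun t' => p t' r) t).re) + ((deriv (fun r' => deriv (fun t' => f t' r') t) r).im * (p t r).im + (deriv (fun r' => f t r') r).im * (deriv (fun t' => p t' r) t).im))) := by
    have hfe : (fun t' => deriv (fun s => M s r) t') =
        (fun t' => Ff M V f p μ₀ Υ t' r) := funext fun t' => hMt_eq t' r hr
    rw [hfe]
    simp only [Ff]
    exact hFf_t.deriv
  -- V_rr via r-derivative of the hVr right-hand side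
  have hnf_r : HasDerivAt (fun r' => ‖f t r'‖ ^ 2) (2 * ((f t r).re * (deriv (fun r' => f t r') r).re + (f t r).im * (deriv (fun r' => f t r') r).im)) r := hasDerivAt_cnormsq hf_r
  have hnfr_r : HasDerivAt (fun r' => ‖deriv (fun s => f t s) r'‖ ^ 2) (2 * ((deriv (fun s => f t s) r).re * (deriv (fun r' => deriv (fun s => f t s) r') r).re + (deriv (fun s => f t s) r).im * (deriv (fun r' => deriv (fun s => f t s) r') r).im)) r :=
    hasDerivAt_cnormsq hfr_r
  have hnp_r : HasDerivAt (fun r' => ‖p t r'‖ ^ 2) (2 * ((p t r).re * (deriv (fun r' => p t r') r).re + (p t r).im * (deriv (fun r' => p t r') r).im)) r := hasDerivAt_cnormsq hp_r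
  have hinv : HasDerivAt (fun r' => (1 - 2 * M t r' / r')⁻¹) (-(2 * M t r / r ^ 2 - 2 * deriv (fun r' => M t r') r / r) / (1 - 2 * M t r / r) ^ 2) r :=
    hφ_r.inv hφpos.ne'
  have hr2' : HasDerivAt (fun r' : ℝ => r' ^ 2) (2 * r) r := by
    simpa using hasDerivAt_pow 2 r
  have hm_div : HasDerivAt (fun r' => M t r' / r' ^ 2) ((deriv (fun r' => M t r') r * r ^ 2 - M t r * (2 * r)) / (r ^ 2) ^ 2) r :=
    hM_r.div hr2' (pow_ne_zero 2 hr.ne')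
  have h4πrμ : HasDerivAt (fun r' => 4 * π * r' * μ₀) (4 * π * 1 * μ₀) r :=
    ((hasDerivAt_id r).const_mul (4 * π)).mul_const μ₀
  have hsub : HasDerivAt (fun r' => ‖f t r'‖ ^ 2 - (1 - 2 * M t r' / r') *
      (‖deriv (fun s => f t s) r'‖ ^ 2 + ‖p t r'‖ ^ 2) / Υ ^ 2) (2 * ((f t r).re * (deriv (fun r' => f t r') r).re + (f t r).im * (deriv (fun r' => f t r') r).im) - ((2 * M t r / r ^ 2 - 2 * deriv (fun r' => M t r') r / r) * (‖deriv (fun r' => f t r') r‖ ^ 2 + ‖p t r‖ ^ 2) + (1 - 2 * M t r / r) * (2 * ((deriv (fun s => f t s) r).re * (deriv (fun r' => deriv (fun s => f t s) r') r).re + (deriv (fun s => f t s) r).im * (deriv (fun r' => deriv (fun s => f t s) r') r).im) + 2 * ((p t r).re * (deriv (fun r' => p t r') r).re + (p t r).im * (deriv (fun r' => p t r') r).im))) / Υ ^ 2) r :=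
    hnf_r.sub ((hφ_r.mul (hnfr_r.add hnp_r)).div_const (Υ ^ 2))
  have hbig : HasDerivAt (fun r' => M t r' / r' ^ 2 - 4 * π * r' * μ₀ *
      (‖f t r'‖ ^ 2 - (1 - 2 * M t r' / r') *
        (‖deriv (fun s => f t s) r'‖ ^ 2 + ‖p t r'‖ ^ 2) / Υ ^ 2)) (((deriv (fun r' => M t r') r * r ^ 2 - M t r * (2 * r)) / (r ^ 2) ^ 2) - (4 * π * 1 * μ₀ * (‖f t r‖ ^ 2 - (1 - 2 * M t r / r) * (‖deriv (fun r' => f t r') r‖ ^ 2 + ‖p t r‖ ^ 2) / Υ ^ 2) + 4 * π * r * μ₀ * (2 * ((f t r).re * (deriv (fun r' => f t r') r).re + (f t r).im * (deriv (fun r' => f t r') r).im) - ((2 * M t r / r ^ 2 - 2 * deriv (fun r' => M t r') r / r) * (‖deriv (fun r' => f t r') r‖ ^ 2 + ‖p t r‖ ^ 2) + (1 - 2 * M t r / r) * (2 * ((deriv (fun s => f t s) r).re * (deriv (fun r' => deriv (fun s => f t s) r') r).re + (deriv (fun s => f t s) r).im * (deriv (fun r' => deriv (fun s => f t s) r') r).im)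 + 2 * ((p t r).re * (deriv (fun r' => p t r') r).re + (p t r).im * (deriv (fun r' => p t r') r).im))) / Υ ^ 2))) r :=
    hm_div.sub (h4πrμ.mul hsub)
  have hvrr : deriv (fun r' => deriv (fun s => V t s) r') r = (-(2 * M t r / r ^ 2 - 2 * deriv (fun r' => M t r') r / r) / (1 - 2 * M t r / r) ^ 2 * (M t r / r ^ 2 - 4 * π * r * μ₀ * (‖f t r‖ ^ 2 - (1 - 2 * M t r / r) * (‖deriv (fun r' => f t r') r‖ ^ 2 + ‖p t r‖ ^ 2) / Υ ^ 2)) + (1 - 2 * M t r / r)⁻¹ * (((deriv (fun r' => M t r') r * r ^ 2 - M t r * (2 * r)) / (r ^ 2) ^ 2) - (4 * π * 1 * μ₀ * (‖f t r‖ ^ 2 - (1 - 2 * M t r / r) * (‖deriv (fun r' => f t r') r‖ ^ 2 + ‖p t r‖ ^ 2) / Υ ^ 2) + 4 * π * r * μ₀ * (2 * ((f t r).re * (deriv (fun r' => f t r') r).re + (f t r).im * (deriv (fun r' => f t r') r).im) - ((2 * M t r / r ^ 2 - 2 * deriv (fun r' => M t r') r / r) * (‖deriv (fun r' => f t r') r‖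 ^ 2 + ‖p t r‖ ^ 2) + (1 - 2 * M t r / r) * (2 * ((deriv (fun s => f t s) r).re * (deriv (fun r' => deriv (fun s => f t s) r') r).re + (deriv (fun s => f t s) r).im * (deriv (fun r' => deriv (fun s => f t s) r') r).im) + 2 * ((p t r).re * (deriv (fun r' => p t r') r).re + (p t r).im * (deriv (fun r' => p t r') r).im))) / Υ ^ 2)))) := by
    have heve : (fun r' => deriv (fun s => V t s) r') =ᶠ[𝓝 r]
        (fun r' => (1 - 2 * M t r' / r')⁻¹ * (M t r' / r' ^ 2 - 4 * π * r' * μ₀ *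
          (‖f t r'‖ ^ 2 - (1 - 2 * M t r' / r') *
            (‖deriv (fun s => f t s) r'‖ ^ 2 + ‖p t r'‖ ^ 2) / Υ ^ 2))) := by
      filter_upwards [Ioi_mem_nhds hr] with r' hr' using hVr' t r' hr'
    rw [heve.deriv_eq]
    exact (hinv.mul hbig).deriv
  -- final algebra
  have hexp2 : Real.exp (2 * V t r) = Real.exp (V t r) * Real.exp (V t r) := by
    rw [two_mul, Real.exp_add]
  rw [hexp2, hMtt, hvrr, hMt_eq t r hr]
  simp only [Ff]
  rw [hftr_eq, hpt' t r hr, hdfi_eq, hMr' t r hr, hVr' t r hr]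
  simp only [cnormsq, Complex.add_re, Complex.add_im, Complex.mul_re, Complex.mul_im,
    Complex.ofReal_re, Complex.ofReal_im, Complex.neg_re, Complex.neg_im,
    ← Complex.ofReal_pow, ← Complex.ofReal_inv, Complex.re_ofNat, Complex.im_ofNat,
    div_eq_mul_inv, ← Complex.ofReal_inv]
  simp only [← div_eq_mul_inv (2 * M t r) r]
  generalize hsq : Real.sqrt (1 - 2 * M t r / r) = sq at *
  have hM_elim : M t r = (r - r * sq ^ 2) / 2 := by
    field_simp at hs2; nlinarith [hs2]
  rw [hM_elim]
  have hsne : sq ≠ 0 := ne_of_gt hspos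
  have hrne : (r:ℝ) ≠ 0 := hr.ne'
  have hΥne : Υ ≠ 0 := hΥ.ne'
  have hene : Real.exp (V t r) ≠ 0 := Real.exp_ne_zero _
  field_simp
  ring

end
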